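/- Properties of the projections π_i: (1) π1⟨u,v⟩ →* u and π2⟨u,v⟩ →* v. (2) If Γ ⊢_{λs} t : A ∧ B, then Γ ⊢_{λs} π1 t : A and Γ ⊢_{λs} π2 t : B. -/

import Mathlib

/-! Types: atoms, their formal duals, conjunction, disjunction. -/

inductive MTy : Type where
  | atom : ℕ → MTy
  | natom : ℕ → MTy
  | and : MTy → MTy → MTy
  | or : MTy → MTy → MTy
deriving DecidableEq

/-- Negation of an m-type. -/
def MTy.neg : MTy → MTy
  | .atom a => .natom a
  | .natom a => .atom a
  | .and A B => .or A.neg B.neg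
  | .or A B => .and A.neg B.neg

/-- Types: m-types or ⊥. -/
inductive Ty : Type where
  | m : MTy → Ty
  | bot : Ty
deriving DecidableEq

/-! λ_s-terms of the system λ^Sym_Prop. -/

inductive LTerm : Type where
  | var : ℕ → LTerm
  | pair : LTerm → LTerm → LTerm
  | inj1 : LTerm → LTerm
  | inj2 : LTerm → LTerm
  | lam : ℕ → LTerm → LTerm
  | star : LTerm → LTerm → LTerm
deriving DecidableEq

namespace LTerm

/-- Free variables. -/
def Fv : LTerm → Finset ℕ
  | var x => {x}
  | pair u v => u.Fv ∪ v.Fv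
  | inj1 t => t.Fv
  | inj2 t => t.Fv
  | lam x t => t.Fv.erase x
  | star u v => u.Fv ∪ v.Fv

/-- Substitution u[x := v]. -/
def subst : LTerm → ℕ → LTerm → LTerm
  | var y, x, v => if y = x then v else var y
  | pair a b, x, v => pair (a.subst x v) (b.subst x v)
  | inj1 t, x, v => inj1 (t.subst x v)
  | inj2 t, x, v => inj2 (t.subst x v)
  | lam y t, x, v => if y = x then lam y t else lam y (t.subst x v)
  | star a b, x, v => star (a.subst x v) (b.subst x v)

/-- Number of free occurrences of a variable. -/
def countFree : LTerm → ℕ → ℕ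
  | var y, x => if y = x then 1 else 0
  | pair a b, x => a.countFree x + b.countFree x
  | inj1 t, x => t.countFree x
  | inj2 t, x => t.countFree x
  | lam y t, x => if y = x then 0 else t.countFree x
  | star a b, x => a.countFree x + b.countFree x

/-- A natural number strictly larger than every variable occurring in the term. -/
def freshVar : LTerm → ℕ
  | var x => x + 1
  | pair u v => max u.freshVar v.freshVar
  | inj1 t => t.freshVar
  | inj2 t => t.freshVar
  | lam x t => max (x + 1) t.freshVar
  | star u v => max u.freshVar v.freshVar

end LTerm

/-- Typing for λ_s-terms (Γ ⊢_{λs} t : C). Contexts assign m-types to variables. -/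
inductive LTyping : (ℕ → Option MTy) → LTerm → Ty → Prop where
  | var {Γ : ℕ → Option MTy} {x : ℕ} {A : MTy} :
      Γ x = some A → LTyping Γ (.var x) (.m A)
  | pair {Γ u v A B} :
      LTyping Γ u (.m A) → LTyping Γ v (.m B) → LTyping Γ (.pair u v) (.m (.and A B))
  | inj1 {Γ t A B} :
      LTyping Γ t (.m A) → LTyping Γ (.inj1 t) (.m (.or A B))
  | inj2 {Γ t A B} :
      LTyping Γ t (.m B) → LTyping Γ (.inj2 t) (.m (.or A B))
  | lam {Γ x t A} :
      LTyping (Function.update Γ x (some A)) t .bot → LTyping Γ (.lam x t) (.m A.neg)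
  | star {Γ u v A} :
      LTyping Γ u (.m A.neg) → LTyping Γ v (.m A) → LTyping Γ (.star u v) .bot

/-- One-step reduction of λ_s-terms, closed under all term contexts. -/
inductive LStep : LTerm → LTerm → Prop where
  | beta {x u v} : LStep (.star (.lam x u) v) (u.subst x v)
  | betaBar {x u v} : LStep (.star v (.lam x u)) (u.subst x v)
  | eta {x u} : x ∉ u.Fv → LStep (.lam x (.star u (.var x))) u
  | etaBar {x u} : x ∉ u.Fv → LStep (.lam x (.star (.var x) u)) u
  | pi1 {u v w} : LStep (.star (.pair u v) (.inj1 w)) (.star u w)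
  | pi2 {u v w} : LStep (.star (.pair u v) (.inj2 w)) (.star v w)
  | pi1Bar {u v w} : LStep (.star (.inj1 w) (.pair u v)) (.star w u)
  | pi2Bar {u v w} : LStep (.star (.inj2 w) (.pair u v)) (.star w v)
  | triv {x u v} : (∃ Γ, LTyping Γ u .bot) → (∃ Γ, LTyping Γ v .bot) →
      u.countFree x = 1 → u ≠ .var x → LStep (u.subst x v) v
  | pairL {u u' v} : LStep u u' → LStep (.pair u v) (.pair u' v)
  | pairR {u v v'} : LStep v v' → LStep (.pair u v) (.pair u v')
  | inj1C {t t'} : LStep t t' → LStep (.inj1 t) (.inj1 t')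
  | inj2C {t t'} : LStep t t' → LStep (.inj2 t) (.inj2 t')
  | lamC {x t t'} : LStep t t' → LStep (.lam x t) (.lam x t')
  | starL {u u' v} : LStep u u' → LStep (.star u v) (.star u' v)
  | starR {u v v'} : LStep v v' → LStep (.star u v) (.star u v')

/-- ω-reduction: reduction of a redex which is not within the scope of a λ-abstraction. -/
inductive LStepOmega : LTerm → LTerm → Prop where
  | beta {x u v} : LStepOmega (.star (.lam x u) v) (u.subst x v)
  | betaBar {x u v} : LStepOmega (.star v (.lam x u)) (u.subst x v)
  | eta {x u} : x ∉ u.Fv → LStepOmega (.lam x (.star u (.var x))) u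
  | etaBar {x u} : x ∉ u.Fv → LStepOmega (.lam x (.star (.var x) u)) u
  | pi1 {u v w} : LStepOmega (.star (.pair u v) (.inj1 w)) (.star u w)
  | pi2 {u v w} : LStepOmega (.star (.pair u v) (.inj2 w)) (.star v w)
  | pi1Bar {u v w} : LStepOmega (.star (.inj1 w) (.pair u v)) (.star w u)
  | pi2Bar {u v w} : LStepOmega (.star (.inj2 w) (.pair u v)) (.star w v)
  | triv {x u v} : (∃ Γ, LTyping Γ u .bot) → (∃ Γ, LTyping Γ v .bot) →
      u.countFree x = 1 → u ≠ .var x → LStepOmega (u.subst x v) v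
  | pairL {u u' v} : LStepOmega u u' → LStepOmega (.pair u v) (.pair u' v)
  | pairR {u v v'} : LStepOmega v v' → LStepOmega (.pair u v) (.pair u v')
  | inj1C {t t'} : LStepOmega t t' → LStepOmega (.inj1 t) (.inj1 t')
  | inj2C {t t'} : LStepOmega t t' → LStepOmega (.inj2 t) (.inj2 t')
  | starL {u u' v} : LStepOmega u u' → LStepOmega (.star u v) (.star u' v)
  | starR {u v v'} : LStepOmega v v' → LStepOmega (.star u v) (.star u v')

/-! c-terms of the system CCL. -/

inductive CTerm : Type where
  | var : ℕ → CTerm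
  | K : CTerm
  | S : CTerm
  | C : CTerm
  | P : CTerm
  | Q1 : CTerm
  | Q2 : CTerm
  | app : CTerm → CTerm → CTerm
  | star : CTerm → CTerm → CTerm
deriving DecidableEq

namespace CTerm

/-- The combinator I = (S K K). -/
def I : CTerm := .app (.app .S .K) .K

/-- Substitution U[x := V]. -/
def subst : CTerm → ℕ → CTerm → CTerm
  | var y, x, v => if y = x then v else var y
  | app a b, x, v => app (a.subst x v) (b.subst x v)
  | star a b, x, v => star (a.subst x v) (b.subst x v)
  | c, _, _ => c

/-- Variables occurring in a c-term. -/
def vars : CTerm → Finset ℕ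
  | var y => {y}
  | app a b => a.vars ∪ b.vars
  | star a b => a.vars ∪ b.vars
  | _ => ∅

/-- A c-term is a pre-term iff it does not contain the symbol ⋆. -/
def PreTerm : CTerm → Prop
  | star _ _ => False
  | app a b => a.PreTerm ∧ b.PreTerm
  | _ => True

/-- A c-term is a star-term iff it is U ⋆ V for some pre-terms U, V. -/
def StarTerm (T : CTerm) : Prop :=
  ∃ U V : CTerm, U.PreTerm ∧ V.PreTerm ∧ T = .star U V

/-- The abstraction algorithm l_x. -/
def lx (x : ℕ) : CTerm → CTerm
  | var y => if y = x then I else .app .K (var y)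
  | app U V => if x ∈ (app U V).vars then .app (.app .S (lx x U)) (lx x V)
               else .app .K (app U V)
  | star U V => .app (.app .C (lx x U)) (lx x V)
  | T => .app .K T

end CTerm

/-- Typing for c-terms (Γ ⊢_c T : C). -/
inductive CTyping : (ℕ → Option MTy) → CTerm → Ty → Prop where
  | var {Γ : ℕ → Option MTy} {x : ℕ} {A : MTy} :
      Γ x = some A → CTyping Γ (.var x) (.m A)
  | K {Γ} (A B : MTy) :
      CTyping Γ .K (.m (.or A.neg (.or B A)))
  | S {Γ} (A B C : MTy) :
      CTyping Γ .S (.m (.or (.and A (.and B C.neg)) (.or (.and A B.neg) (.or A.neg C))))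
  | C {Γ} (A B : MTy) :
      CTyping Γ .C (.m (.or (.and A B) (.or (.and A B.neg) A.neg)))
  | P {Γ} (A B : MTy) :
      CTyping Γ .P (.m (.or A.neg (.or B.neg (.and A B))))
  | Q1 {Γ} (A B : MTy) :
      CTyping Γ .Q1 (.m (.or A.neg (.or A B)))
  | Q2 {Γ} (A B : MTy) :
      CTyping Γ .Q2 (.m (.or B.neg (.or A B)))
  | app {Γ U V A B} :
      CTyping Γ U (.m (.or A.neg B)) → CTyping Γ V (.m A) → CTyping Γ (.app U V) (.m B)
  | star {Γ U V A} :
      CTyping Γ U (.m A.neg) → CTyping Γ V (.m A) → CTyping Γ (.star U V) .bot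

/-- One-step reduction of c-terms, closed under all term contexts. -/
inductive CStep : CTerm → CTerm → Prop where
  | k {U V} : CStep (.app (.app .K U) V) U
  | s {U V W} : CStep (.app (.app (.app .S U) V) W) (.app (.app U W) (.app V W))
  | cr {U V W} : CStep (.star (.app (.app .C U) V) W) (.star (.app U W) (.app V W))
  | cl {U V W} : CStep (.star W (.app (.app .C U) V)) (.star (.app U W) (.app V W))
  | er {U} : CStep (.app (.app .C (.app .K U)) CTerm.I) U
  | el {U} : CStep (.app (.app .C CTerm.I) (.app .K U)) U
  | pq1 {U V W} : CStep (.star (.app (.app .P U) V) (.app .Q1 W)) (.star U W)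
  | pq2 {U V W} : CStep (.star (.app (.app .P U) V) (.app .Q2 W)) (.star V W)
  | qp1 {U V W} : CStep (.star (.app .Q1 W) (.app (.app .P U) V)) (.star W U)
  | qp2 {U V W} : CStep (.star (.app .Q2 W) (.app (.app .P U) V)) (.star W V)
  | simp {x W U V} : (∃ Γ, CTyping Γ W .bot) →
      CStep (W.subst x (.app (.app .C (.app .K U)) (.app .K V))) (.star U V)
  | appL {U U' V} : CStep U U' → CStep (.app U V) (.app U' V)
  | appR {U V V'} : CStep V V' → CStep (.app U V) (.app U V')
  | starL {U U' V} : CStep U U' → CStep (.star U V) (.star U' V)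
  | starR {U V V'} : CStep V V' → CStep (.star U V) (.star U V')

/-- The translation φ from λ_s-terms to c-terms. -/
def phi : LTerm → CTerm
  | .var x => .var x
  | .lam x t => CTerm.lx x (phi t)
  | .star u v => .star (phi u) (phi v)
  | .pair u v => .app (.app .P (phi u)) (phi v)
  | .inj1 t => .app .Q1 (phi t)
  | .inj2 t => .app .Q2 (phi t)

/-! Notations π_i and [·,·] for λ_s-terms, and the translation ψ. -/

/-- π_1 t = λx.(t ⋆ σ1(x)) with x ∉ Fv(t). -/
def proj1 (t : LTerm) : LTerm := .lam t.freshVar (.star t (.inj1 (.var t.freshVar)))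

/-- π_2 t = λx.(t ⋆ σ2(x)) with x ∉ Fv(t). -/
def proj2 (t : LTerm) : LTerm := .lam t.freshVar (.star t (.inj2 (.var t.freshVar)))

/-- [u,v] = λx.(u ⋆ ⟨v,x⟩) with x ∉ Fv(u) ∪ Fv(v). -/
def lapp (u v : LTerm) : LTerm :=
  .lam (max u.freshVar v.freshVar) (.star u (.pair v (.var (max u.freshVar v.freshVar))))

/-- The translation ψ from c-terms to λ_s-terms. -/
def psi : CTerm → LTerm
  | .var x => .var x
  | .K => .lam 0 (.star (proj1 (.var 0)) (proj2 (proj2 (.var 0))))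
  | .S => .lam 0 (.star
            (lapp (lapp (proj1 (.var 0)) (proj1 (proj2 (proj2 (.var 0)))))
                  (lapp (proj1 (proj2 (.var 0))) (proj1 (proj2 (proj2 (.var 0))))))
            (proj2 (proj2 (proj2 (.var 0)))))
  | .C => .lam 0 (.star (lapp (proj1 (.var 0)) (proj2 (proj2 (.var 0))))
                        (lapp (proj1 (proj2 (.var 0))) (proj2 (proj2 (.var 0)))))
  | .P => .lam 0 (.star (.pair (proj1 (.var 0)) (proj1 (proj2 (.var 0))))
                        (proj2 (proj2 (.var 0))))
  | .Q1 => .lam 0 (.star (.inj1 (proj1 (.var 0))) (proj2 (.var 0)))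
  | .Q2 => .lam 0 (.star (.inj2 (proj1 (.var 0))) (proj2 (.var 0)))
  | .app U V => lapp (psi U) (psi V)
  | .star U V => .star (psi U) (psi V)

/-! π₁⟨u,v⟩ reduces to u by the redex ⟨u,v⟩ ⋆ σ₁(x) → u ⋆ x under the binder followed by η, which
applies because the bound variable was chosen fresh for ⟨u,v⟩, hence for u. Typing: with
t : A ∧ B = (A⊥ ∨ B⊥)⊥ and x : A⊥, the body t ⋆ σ₁(x) has type ⊥, so π₁ t : A⊥⊥ = A. -/

theorem MTy.neg_neg (A : MTy) : A.neg.neg = A := by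
  induction A with
  | atom | natom => rfl
  | and A B ihA ihB | or A B ihA ihB => simp only [MTy.neg, ihA, ihB]

namespace LTerm

theorem lt_freshVar_of_mem_Fv {t : LTerm} {y : ℕ} (hy : y ∈ t.Fv) : y < t.freshVar := by
  induction t with
  | var x => simp_all [Fv, freshVar]
  | inj1 t ih | inj2 t ih => exact ih hy
  | lam x t ih =>
      simp only [Fv, Finset.mem_erase] at hy
      exact lt_max_of_lt_right (ih hy.2)
  | pair u v ihu ihv | star u v ihu ihv =>
      simp only [Fv, Finset.mem_union] at hy
      rcases hy with hu | hv
      · exact lt_max_of_lt_left (ihu hu)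
      · exact lt_max_of_lt_right (ihv hv)

theorem not_mem_Fv_of_freshVar_le {t : LTerm} {x : ℕ} (hx : t.freshVar ≤ x) : x ∉ t.Fv :=
  fun h => (lt_freshVar_of_mem_Fv h).not_ge hx

end LTerm

namespace LTyping

theorem congr_context {Γ Γ' : ℕ → Option MTy} {t : LTerm} {C : Ty} (h : LTyping Γ t C)
    (hΓ : ∀ y ∈ t.Fv, Γ y = Γ' y) : LTyping Γ' t C := by
  induction h generalizing Γ' with
  | var hx => exact .var ((hΓ _ (Finset.mem_singleton_self _)).symm.trans hx)
  | pair _ _ ihu ihv =>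
      exact .pair (ihu fun y hy => hΓ y (Finset.mem_union_left _ hy))
        (ihv fun y hy => hΓ y (Finset.mem_union_right _ hy))
  | star _ _ ihu ihv =>
      exact .star (ihu fun y hy => hΓ y (Finset.mem_union_left _ hy))
        (ihv fun y hy => hΓ y (Finset.mem_union_right _ hy))
  | inj1 _ ih => exact .inj1 (ih hΓ)
  | inj2 _ ih => exact .inj2 (ih hΓ)
  | @lam _ x _ _ _ ih =>
      refine .lam (ih fun y hy => ?_)
      by_cases hyx : y = x
      · simp only [hyx, Function.update_self]
      · simp only [Function.update_of_ne hyx]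
        exact hΓ y (Finset.mem_erase.2 ⟨hyx, hy⟩)

theorem update_freshVar {Γ : ℕ → Option MTy} {t : LTerm} {C : Ty} (h : LTyping Γ t C)
    (a : Option MTy) : LTyping (Function.update Γ t.freshVar a) t C :=
  h.congr_context fun _ hy =>
    (Function.update_of_ne (LTerm.lt_freshVar_of_mem_Fv hy).ne _ _).symm

theorem proj1 {Γ : ℕ → Option MTy} {t : LTerm} {A B : MTy}
    (ht : LTyping Γ t (.m (.and A B))) : LTyping Γ (proj1 t) (.m A) := by
  rw [← MTy.neg_neg A]
  refine .lam (.star (A := .or A.neg B.neg) ?_ (.inj1 (.var (Function.update_self ..))))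
  simpa only [MTy.neg, MTy.neg_neg] using ht.update_freshVar _

theorem proj2 {Γ : ℕ → Option MTy} {t : LTerm} {A B : MTy}
    (ht : LTyping Γ t (.m (.and A B))) : LTyping Γ (proj2 t) (.m B) := by
  rw [← MTy.neg_neg B]
  refine .lam (.star (A := .or A.neg B.neg) ?_ (.inj2 (.var (Function.update_self ..))))
  simpa only [MTy.neg, MTy.neg_neg] using ht.update_freshVar _

end LTyping

theorem proj1_pair_reduces (u v : LTerm) : Relation.ReflTransGen LStep (proj1 (.pair u v)) u :=
  .head (.lamC .pi1) (.single (.eta (LTerm.not_mem_Fv_of_freshVar_le (le_max_left _ _))))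

theorem proj2_pair_reduces (u v : LTerm) : Relation.ReflTransGen LStep (proj2 (.pair u v)) v :=
  .head (.lamC .pi2) (.single (.eta (LTerm.not_mem_Fv_of_freshVar_le (le_max_right _ _))))

/-- Properties of the projections π_i. -/
theorem proj_properties :
    (∀ u v : LTerm,
        Relation.ReflTransGen LStep (proj1 (.pair u v)) u ∧
        Relation.ReflTransGen LStep (proj2 (.pair u v)) v) ∧
    (∀ (Γ : ℕ → Option MTy) (t : LTerm) (A B : MTy),
        LTyping Γ t (.m (.and A B)) →
        LTyping Γ (proj1 t) (.m A) ∧ LTyping Γ (proj2 t) (.m B)) :=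
  ⟨fun u v => ⟨proj1_pair_reduces u v, proj2_pair_reduces u v⟩,
    fun _ _ _ _ ht => ⟨ht.proj1, ht.proj2⟩⟩
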